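/- The function ϱ(Λ₁, Λ₂) = min{ϱ̄(Λ₁, Λ₂), 2^{-1/2}} satisfies the triangle inequality on the collection of Delone sets in ℝ^d, where ϱ̄(Λ₁, Λ₂) = inf{ε > 0 : ∃ s, t ∈ B_ε(0) such that B_{1/ε}(0) ∩ (Λ₁ - s) = B_{1/ε}(0) ∩ (Λ₂ - t)}. -/

import Mathlib

open Set Metric

/-- The translate `Λ - t` of a point set. -/
def translateSet {d : ℕ} (Λ : Set (EuclideanSpace ℝ (Fin d))) (t : EuclideanSpace ℝ (Fin d)) :
    Set (EuclideanSpace ℝ (Fin d)) :=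
  (fun x => x - t) '' Λ

/-- `Λ` is a Delone set: uniformly discrete and relatively dense. -/
def IsDeloneSet {d : ℕ} (Λ : Set (EuclideanSpace ℝ (Fin d))) : Prop :=
  (∃ ε > (0 : ℝ), ∀ x ∈ Λ, ∀ y ∈ Λ, x ≠ y → ε < dist x y) ∧
  (∃ R > (0 : ℝ), ∀ x : EuclideanSpace ℝ (Fin d), (Λ ∩ Metric.ball x R).Nonempty)

/-- The quantity ϱ̄. -/
noncomputable def rhoBar {d : ℕ} (Λ₁ Λ₂ : Set (EuclideanSpace ℝ (Fin d))) : ℝ :=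
  sInf {ε : ℝ | 0 < ε ∧ ∃ s t : EuclideanSpace ℝ (Fin d), ‖s‖ < ε ∧ ‖t‖ < ε ∧
    Metric.ball (0 : EuclideanSpace ℝ (Fin d)) (1 / ε) ∩ translateSet Λ₁ s =
      Metric.ball (0 : EuclideanSpace ℝ (Fin d)) (1 / ε) ∩ translateSet Λ₂ t}

/-- The metric ϱ = min(ϱ̄, 2^{-1/2}). -/
noncomputable def rhoDelone {d : ℕ} (Λ₁ Λ₂ : Set (EuclideanSpace ℝ (Fin d))) : ℝ :=
  min (rhoBar Λ₁ Λ₂) ((2 : ℝ) ^ (-(1 / 2 : ℝ)))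

/-!
If `Λ₁ - s₁` and `Λ₂ - t₁` agree on `B_{1/a}(0)` and `Λ₂ - s₂` and `Λ₃ - t₂` agree on `B_{1/b}(0)`,
translating the second agreement by `t₁ - s₂` lines up the two translates of `Λ₂`, so `Λ₁ - s₁`
and `Λ₃ - (t₂ + t₁ - s₂)` agree on a slightly smaller ball. With `b ≤ a` (by symmetry), the new
shift has norm `< a + 2b`; a further common shift of norm `< b` brings both shifts into `B_ε(0)`
for any `ε > a + b`. The radii lost, `b` and `a + 2b`, stay below `1/a - 1/ε` and `1/b - 1/ε`
as long as `ε² ≤ 1/2`, which is where the cap `2^{-1/2}` comes from.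
-/

section TranslatesAgree

variable {E : Type*} [SeminormedAddCommGroup E]

def TranslatesAgree (r : ℝ) (Λ₁ Λ₂ : Set E) (s t : E) : Prop :=
  ∀ z : E, ‖z‖ < r → (z + s ∈ Λ₁ ↔ z + t ∈ Λ₂)

variable {r r' : ℝ} {Λ₁ Λ₂ Λ₃ : Set E} {s t u : E}

theorem TranslatesAgree.symm (h : TranslatesAgree r Λ₁ Λ₂ s t) : TranslatesAgree r Λ₂ Λ₁ t s :=
  fun z hz => (h z hz).symm

theorem TranslatesAgree.mono (h : TranslatesAgree r Λ₁ Λ₂ s t) (hr : r' ≤ r) :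
    TranslatesAgree r' Λ₁ Λ₂ s t :=
  fun z hz => h z (hz.trans_le hr)

theorem TranslatesAgree.trans (h₁₂ : TranslatesAgree r Λ₁ Λ₂ s t)
    (h₂₃ : TranslatesAgree r Λ₂ Λ₃ t u) : TranslatesAgree r Λ₁ Λ₃ s u :=
  fun z hz => (h₁₂ z hz).trans (h₂₃ z hz)

theorem TranslatesAgree.add (h : TranslatesAgree r Λ₁ Λ₂ s t) (v : E) :
    TranslatesAgree (r - ‖v‖) Λ₁ Λ₂ (s + v) (t + v) := by
  intro z hz
  have hzv : ‖z + v‖ < r := (norm_add_le z v).trans_lt (by linarith)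
  convert h (z + v) hzv using 2 <;> abel

theorem add_mem_iff_eq_zero_of_separated {ε : ℝ} {Λ : Set E} {x z : E}
    (sep : ∀ p ∈ Λ, ∀ q ∈ Λ, p ≠ q → ε < dist p q) (hx : x ∈ Λ) (hz : ‖z‖ < ε) :
    z + x ∈ Λ ↔ z = 0 := by
  refine ⟨fun hzx => by_contra fun hz0 => ?_, fun hz0 => by simpa [hz0] using hx⟩
  have hε := sep _ hzx x hx (by simpa using hz0)
  rw [dist_eq_norm, add_sub_cancel_right] at hε
  exact hε.not_gt hz

theorem translatesAgree_of_separated {ε : ℝ}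
    (sep₁ : ∀ p ∈ Λ₁, ∀ q ∈ Λ₁, p ≠ q → ε < dist p q)
    (sep₂ : ∀ p ∈ Λ₂, ∀ q ∈ Λ₂, p ≠ q → ε < dist p q) (hs : s ∈ Λ₁) (ht : t ∈ Λ₂) :
    TranslatesAgree ε Λ₁ Λ₂ s t := fun _ hz => by
  rw [add_mem_iff_eq_zero_of_separated sep₁ hs hz, add_mem_iff_eq_zero_of_separated sep₂ ht hz]

end TranslatesAgree

section Admissible

variable {E : Type*} [SeminormedAddCommGroup E]

def rhoBarAdmissible (Λ₁ Λ₂ : Set E) : Set ℝ :=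
  {ε : ℝ | 0 < ε ∧ ∃ s t : E, ‖s‖ < ε ∧ ‖t‖ < ε ∧ TranslatesAgree (1 / ε) Λ₁ Λ₂ s t}

variable {Λ₁ Λ₂ Λ₃ : Set E} {a b ε : ℝ}

theorem rhoBarAdmissible_symm (h : ε ∈ rhoBarAdmissible Λ₁ Λ₂) : ε ∈ rhoBarAdmissible Λ₂ Λ₁ :=
  let ⟨hε, s, t, hs, ht, hst⟩ := h
  ⟨hε, t, s, ht, hs, hst.symm⟩

theorem bddBelow_rhoBarAdmissible : BddBelow (rhoBarAdmissible Λ₁ Λ₂) :=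
  ⟨0, fun _ hε => hε.1.le⟩

theorem one_div_add_le_one_div_of_sq_le_half (ha : 0 < a) (hb : 0 < b) (hba : b ≤ a) (hab : a + b ≤ ε)
    (hε : ε ^ 2 ≤ 1 / 2) : 1 / ε + b ≤ 1 / a ∧ 1 / ε + (a + 2 * b) ≤ 1 / b := by
  have hε0 : 0 < ε := by linarith
  have haε : a * ε ≤ 1 / 2 := by nlinarith
  have hsε : (a + 2 * b) * ε ≤ 3 / 4 := by nlinarith
  constructor
  · rw [div_add' _ _ _ hε0.ne', div_le_div_iff₀ hε0 ha]
    nlinarith [mul_le_mul_of_nonneg_left haε hb.le]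
  · rw [div_add' _ _ _ hε0.ne', div_le_div_iff₀ hε0 hb]
    nlinarith [mul_le_mul_of_nonneg_left hsε hb.le]

theorem mem_rhoBarAdmissible_of_le [NormedSpace ℝ E] (hba : b ≤ a) (hab : a + b < ε)
    (hε : ε ^ 2 ≤ 1 / 2) (ha : a ∈ rhoBarAdmissible Λ₁ Λ₂) (hb : b ∈ rhoBarAdmissible Λ₂ Λ₃) :
    ε ∈ rhoBarAdmissible Λ₁ Λ₃ := by
  obtain ⟨ha0, s₁, t₁, hs₁, ht₁, h₁₂⟩ := ha
  obtain ⟨hb0, s₂, t₂, hs₂, ht₂, h₂₃⟩ := hb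
  obtain ⟨hr₁, hr₂⟩ := one_div_add_le_one_div_of_sq_le_half ha0 hb0 hba hab.le hε
  have hv : ‖t₁ - s₂‖ < a + b := (norm_sub_le _ _).trans_lt (by linarith)
  have h₂₃' : TranslatesAgree (1 / ε + b) Λ₂ Λ₃ t₁ (t₂ + (t₁ - s₂)) := by
    simpa only [add_sub_cancel] using (h₂₃.add (t₁ - s₂)).mono (by linarith)
  have h₁₃ := (h₁₂.mono hr₁).trans h₂₃'
  set w := t₂ + (t₁ - s₂)
  have hw : dist w 0 < ε + b := by
    rw [dist_zero_right]
    exact (norm_add_le _ _).trans_lt (by linarith)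
  obtain ⟨p, hpw, hp⟩ := exists_dist_lt_lt hb0 (by linarith) hw
  rw [dist_zero_right] at hp
  rw [dist_eq_norm'] at hpw
  refine ⟨by linarith, s₁ + (p - w), p, ?_, hp, ?_⟩
  · exact (norm_add_le _ _).trans_lt (by linarith)
  · simpa only [add_sub_cancel] using (h₁₃.add (p - w)).mono (by linarith)

theorem mem_rhoBarAdmissible_of_add_lt [NormedSpace ℝ E] (hab : a + b < ε) (hε : ε ^ 2 ≤ 1 / 2)
    (ha : a ∈ rhoBarAdmissible Λ₁ Λ₂) (hb : b ∈ rhoBarAdmissible Λ₂ Λ₃) :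
    ε ∈ rhoBarAdmissible Λ₁ Λ₃ := by
  rcases le_total b a with hba | hab'
  · exact mem_rhoBarAdmissible_of_le hba hab hε ha hb
  · exact rhoBarAdmissible_symm <| mem_rhoBarAdmissible_of_le hab' (by linarith) hε
      (rhoBarAdmissible_symm hb) (rhoBarAdmissible_symm ha)

theorem sInf_rhoBarAdmissible_le [NormedSpace ℝ E] (h₁₂ : (rhoBarAdmissible Λ₁ Λ₂).Nonempty)
    (h₂₃ : (rhoBarAdmissible Λ₂ Λ₃).Nonempty)
    (hε : sInf (rhoBarAdmissible Λ₁ Λ₂) + sInf (rhoBarAdmissible Λ₂ Λ₃) < ε)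
    (hε2 : ε ^ 2 ≤ 1 / 2) : sInf (rhoBarAdmissible Λ₁ Λ₃) ≤ ε := by
  have hgap := half_pos (sub_pos.2 hε)
  obtain ⟨a, ha, ha_lt⟩ := exists_lt_of_csInf_lt h₁₂ (lt_add_of_pos_right _ hgap)
  obtain ⟨b, hb, hb_lt⟩ := exists_lt_of_csInf_lt h₂₃ (lt_add_of_pos_right _ hgap)
  exact csInf_le bddBelow_rhoBarAdmissible
    (mem_rhoBarAdmissible_of_add_lt (by linarith) hε2 ha hb)

end Admissible

theorem mem_translateSet {d : ℕ} {Λ : Set (EuclideanSpace ℝ (Fin d))}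
    {t x : EuclideanSpace ℝ (Fin d)} : x ∈ translateSet Λ t ↔ x + t ∈ Λ := by
  simp [translateSet, sub_eq_iff_eq_add]

theorem ball_inter_translateSet_eq_iff {d : ℕ} {Λ₁ Λ₂ : Set (EuclideanSpace ℝ (Fin d))}
    {s t : EuclideanSpace ℝ (Fin d)} {r : ℝ} :
    ball 0 r ∩ translateSet Λ₁ s = ball 0 r ∩ translateSet Λ₂ t ↔
      TranslatesAgree r Λ₁ Λ₂ s t := by
  simp only [Set.ext_iff, mem_inter_iff, mem_ball_zero_iff, mem_translateSet, TranslatesAgree,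
    and_congr_right_iff]

theorem rhoBar_eq_sInf {d : ℕ} (Λ₁ Λ₂ : Set (EuclideanSpace ℝ (Fin d))) :
    rhoBar Λ₁ Λ₂ = sInf (rhoBarAdmissible Λ₁ Λ₂) := by
  simp only [rhoBar, rhoBarAdmissible, ball_inter_translateSet_eq_iff]

theorem rhoBarAdmissible_nonempty {d : ℕ} {Λ₁ Λ₂ : Set (EuclideanSpace ℝ (Fin d))}
    (h₁ : IsDeloneSet Λ₁) (h₂ : IsDeloneSet Λ₂) : (rhoBarAdmissible Λ₁ Λ₂).Nonempty := by
  obtain ⟨⟨r₁, hr₁, sep₁⟩, R₁, -, dense₁⟩ := h₁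
  obtain ⟨⟨r₂, hr₂, sep₂⟩, R₂, -, dense₂⟩ := h₂
  obtain ⟨x, hx, -⟩ := dense₁ 0
  obtain ⟨y, hy, -⟩ := dense₂ 0
  have hr₁' : 0 < 1 / r₁ := by positivity
  have hr₂' : 0 < 1 / r₂ := by positivity
  set ε := ‖x‖ + ‖y‖ + 1 / r₁ + 1 / r₂ + 1
  have hε : 0 < ε := by positivity
  have hεr₁ : 1 / ε ≤ r₁ := (one_div_le hε hr₁).2 (by linarith [norm_nonneg x, norm_nonneg y])
  have hεr₂ : 1 / ε ≤ r₂ := (one_div_le hε hr₂).2 (by linarith [norm_nonneg x, norm_nonneg y])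
  refine ⟨ε, hε, x, y, by linarith [norm_nonneg y], by linarith [norm_nonneg x], ?_⟩
  exact translatesAgree_of_separated (fun p hp q hq hpq => hεr₁.trans_lt (sep₁ p hp q hq hpq))
    (fun p hp q hq hpq => hεr₂.trans_lt (sep₂ p hp q hq hpq)) hx hy

theorem min_le_min_add_min_of_forall_lt {x y z c : ℝ} (hc : 0 ≤ c) (hy : 0 ≤ y) (hz : 0 ≤ z)
    (h : ∀ ε, y + z < ε → ε ≤ c → x ≤ ε) : min x c ≤ min y c + min z c := by
  by_cases hyz : y + z < c
  · have hx : x ≤ y + z := le_of_forall_gt_imp_ge_of_dense fun ε hε =>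
      (h (min ε c) (lt_min hε hyz) (min_le_right _ _)).trans (min_le_left _ _)
    rw [min_eq_left (by linarith : y ≤ c), min_eq_left (by linarith : z ≤ c)]
    exact (min_le_left _ _).trans hx
  · refine (min_le_right _ _).trans ?_
    simp only [min_def]
    split_ifs <;> linarith

theorem sq_le_half_of_le_two_rpow_neg_half {ε : ℝ} (h0 : 0 ≤ ε) (h : ε ≤ 2 ^ (-(1 / 2 : ℝ))) :
    ε ^ 2 ≤ 1 / 2 :=
  calc ε ^ 2 ≤ ((2 : ℝ) ^ (-(1 / 2 : ℝ))) ^ 2 := pow_le_pow_left₀ h0 h 2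
    _ = 1 / 2 := by
      rw [← Real.rpow_natCast, ← Real.rpow_mul (by norm_num)]
      norm_num

theorem rhoBar_nonneg {d : ℕ} (Λ₁ Λ₂ : Set (EuclideanSpace ℝ (Fin d))) : 0 ≤ rhoBar Λ₁ Λ₂ :=
  rhoBar_eq_sInf Λ₁ Λ₂ ▸ Real.sInf_nonneg fun _ hε => hε.1.le

/-- Triangle inequality for ϱ on Delone sets. -/
theorem rhoDelone_triangle {d : ℕ} (Λ₁ Λ₂ Λ₃ : Set (EuclideanSpace ℝ (Fin d)))
    (h₁ : IsDeloneSet Λ₁) (h₂ : IsDeloneSet Λ₂) (h₃ : IsDeloneSet Λ₃) :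
    rhoDelone Λ₁ Λ₃ ≤ rhoDelone Λ₁ Λ₂ + rhoDelone Λ₂ Λ₃ := by
  refine min_le_min_add_min_of_forall_lt (by positivity) (rhoBar_nonneg _ _) (rhoBar_nonneg _ _)
    fun ε hε hεc => ?_
  have hε0 : 0 ≤ ε := by linarith [rhoBar_nonneg Λ₁ Λ₂, rhoBar_nonneg Λ₂ Λ₃]
  simp only [rhoBar_eq_sInf] at hε ⊢
  exact sInf_rhoBarAdmissible_le (rhoBarAdmissible_nonempty h₁ h₂)
    (rhoBarAdmissible_nonempty h₂ h₃) hε (sq_le_half_of_le_two_rpow_neg_half hε0 hεc)
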